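/- arXiv:2112.14191 — 7 statements merged into one kernel-verified Lean document; each statement's English description precedes it below -/
import Mathlib

section
/- Let M be a 2m×2m antisymmetric complex matrix, L an r×r complex matrix, and W the (2m+r)×(2m+r) block matrix whose top-left block is M, bottom-right block is L, whose top-right block is zero except its last row equals (c_1,...,c_r), and whose bottom-left block is zero except its last column equals (d_1,...,d_r). Then det(W) = det(M)·det(L), for any complex numbers c_a, d_a. -/
/-!
Multiplying `W = [[A, B], [C, D]]` on the left by `[[1, 0], [-C adj A, det A]]` gives
`det A ^ r * det W = det A * det (det A • D - C (adj A) B)`. Here `C (adj A) B = (adj A)ₗₗ • d cᵀ`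
with `l` the last index, and the adjugate of a skew-symmetric matrix of even size is again
skew-symmetric, so its diagonal vanishes and `det W = det A * det D` whenever `det A` can be
cancelled. The general case follows by perturbing `M` to `M + X • J` over `ℂ[X]` with `J`
invertible and skew-symmetric, and setting `X = 0`.
-/

open Matrix

namespace Matrix

variable {R m n : Type*} [CommRing R] [Fintype m] [DecidableEq m]

theorem updateCol_zero_mul_mul_updateRow_zero (A : Matrix m m R) (l : m) (c d : n → R) :
    updateCol 0 l d * A * updateRow 0 l c = A l l • vecMulVec d c := by
  ext i j
  simp only [mul_apply, updateCol_apply, zero_apply, ite_mul, zero_mul, Finset.sum_ite_eq',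
    Finset.mem_univ, ↓reduceIte, updateRow_apply, mul_ite, mul_zero, smul_apply, vecMulVec_apply,
    smul_eq_mul]
  ring

variable [Fintype n] [DecidableEq n]

theorem det_pow_mul_det_fromBlocks (A : Matrix m m R) (B : Matrix m n R) (C : Matrix n m R)
    (D : Matrix n n R) :
    A.det ^ Fintype.card n * (fromBlocks A B C D).det =
      A.det * (A.det • D - C * adjugate A * B).det := by
  have hE : (fromBlocks 1 0 (-(C * adjugate A)) (A.det • 1) : Matrix (m ⊕ n) (m ⊕ n) R).det =
      A.det ^ Fintype.card n := by
    rw [det_fromBlocks_zero₁₂, det_one, det_smul, det_one, one_mul, mul_one]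
  have hprod : fromBlocks 1 0 (-(C * adjugate A)) (A.det • 1) * fromBlocks A B C D =
      fromBlocks A B 0 (A.det • D - C * adjugate A * B) := by
    rw [fromBlocks_multiply, Matrix.neg_mul, Matrix.mul_assoc C, adjugate_mul]
    simp [sub_eq_neg_add]
  rw [← hE, ← det_mul, hprod, det_fromBlocks_zero₂₁]

theorem det_fromBlocks_of_mul_adjugate_mul_eq_zero [IsDomain R] {A : Matrix m m R}
    (hA : A.det ≠ 0) (B : Matrix m n R) (C : Matrix n m R) (D : Matrix n n R)
    (hBC : C * adjugate A * B = 0) :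
    (fromBlocks A B C D).det = A.det * D.det := by
  have h := det_pow_mul_det_fromBlocks A B C D
  rw [hBC, sub_zero, det_smul, mul_left_comm] at h
  exact mul_left_cancel₀ (pow_ne_zero _ hA) h

theorem adjugate_transpose_eq_neg_of_transpose_eq_neg {A : Matrix n n R} (hA : Aᵀ = -A)
    (hn : Odd (Fintype.card n - 1)) : (adjugate A)ᵀ = -adjugate A := by
  rw [adjugate_transpose, hA, ← neg_one_smul R A, adjugate_smul, hn.neg_one_pow, neg_one_smul]

theorem adjugate_apply_self_eq_zero_of_transpose_eq_neg [NoZeroDivisors R] [CharZero R]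
    {A : Matrix n n R} (hA : Aᵀ = -A) (hn : Even (Fintype.card n)) (i : n) :
    adjugate A i i = 0 := by
  have hodd : Odd (Fintype.card n - 1) :=
    Nat.Even.sub_odd (Fintype.card_pos_iff.mpr ⟨i⟩) hn odd_one
  have h := congr_fun₂ (adjugate_transpose_eq_neg_of_transpose_eq_neg hA hodd) i i
  exact CharZero.eq_neg_self_iff.mp h

theorem exists_transpose_eq_neg_det_ne_zero [Nontrivial R] (hn : Even (Fintype.card n)) :
    ∃ J : Matrix n n R, Jᵀ = -J ∧ J.det ≠ 0 := by
  obtain ⟨k, hk⟩ := hn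
  let e : n ≃ Fin k ⊕ Fin k := (Fintype.equivFin n).trans ((finCongr hk).trans finSumFinEquiv.symm)
  refine ⟨reindex e.symm e.symm (J (Fin k) R), ?_, ?_⟩
  · rw [transpose_reindex, J_transpose]
    rfl
  · rw [det_reindex_self]
    exact (isUnit_det_J (Fin k) R).ne_zero

open Polynomial in
theorem det_fromBlocks_updateRow_updateCol_of_transpose_eq_neg [IsDomain R] [CharZero R]
    {M : Matrix m m R} (hM : Mᵀ = -M) (hm : Even (Fintype.card m)) (L : Matrix n n R) (l : m)
    (c d : n → R) :
    (fromBlocks M (updateRow 0 l c) (updateCol 0 l d) L).det = M.det * L.det := by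
  obtain ⟨J, hJ, hJdet⟩ := exists_transpose_eq_neg_det_ne_zero (R := R) hm
  set N : Matrix m m R[X] := (X : R[X]) • J.map C + M.map C
  have hN : Nᵀ = -N := by
    rw [transpose_add, transpose_smul, ← transpose_map, ← transpose_map, hJ, hM,
      Matrix.map_neg _ (map_neg C), Matrix.map_neg _ (map_neg C), smul_neg, neg_add]
  have hNdet : N.det ≠ 0 := fun h => hJdet <| by
    rw [← coeff_det_X_add_C_card J M, h, coeff_zero]
  have hblocks : (X : R[X]) • (fromBlocks J 0 0 0).map C +
      (fromBlocks M (updateRow 0 l c) (updateCol 0 l d) L).map C =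
      fromBlocks N (updateRow 0 l (C ∘ c)) (updateCol 0 l (C ∘ d)) (L.map C) := by
    simp only [fromBlocks_map, fromBlocks_smul, fromBlocks_add, N]
    congr 1 <;> ext i j <;> simp [updateRow_apply, updateCol_apply, apply_ite C]
  rw [← coeff_det_X_add_C_zero (fromBlocks J 0 0 0), hblocks,
    det_fromBlocks_of_mul_adjugate_mul_eq_zero hNdet _ _ _ (by
      rw [updateCol_zero_mul_mul_updateRow_zero,
        adjugate_apply_self_eq_zero_of_transpose_eq_neg hN hm, zero_smul]),
    mul_coeff_zero, coeff_det_X_add_C_zero, ← RingHom.mapMatrix_apply, ← RingHom.map_det,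
    coeff_C_zero]

end Matrix

/-- Determinantal product formula (Lemma 2 of the paper): if `M` is a `2m × 2m`
antisymmetric complex matrix, `L` an `r × r` complex matrix, and `W` is the block
matrix whose top-left block is `M`, bottom-right block is `L`, whose top-right
block vanishes except for its last row `(c 1, …, c r)` and whose bottom-left block
vanishes except for its last column `(d 1, …, d r)`, then `det W = det M * det L`. -/
theorem smooth_splitting_det_product_formula
    (m r : ℕ) (M : Matrix (Fin (2 * m)) (Fin (2 * m)) ℂ) (hM : Mᵀ = -M)
    (L : Matrix (Fin r) (Fin r) ℂ) (c d : Fin r → ℂ) :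
    (Matrix.fromBlocks M
      (Matrix.of fun (i : Fin (2 * m)) (j : Fin r) => if (i : ℕ) = 2 * m - 1 then c j else 0)
      (Matrix.of fun (i : Fin r) (j : Fin (2 * m)) => if (j : ℕ) = 2 * m - 1 then d i else 0)
      L).det = M.det * L.det := by
  rcases Nat.eq_zero_or_pos m with rfl | hm
  · convert det_fromBlocks_zero₂₁ M _ L using 3
    ext i j
    exact j.elim0
  · let l : Fin (2 * m) := ⟨2 * m - 1, by omega⟩
    have hlast (i : Fin (2 * m)) : (i : ℕ) = 2 * m - 1 ↔ i = l := by simp [l, Fin.ext_iff]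
    convert det_fromBlocks_updateRow_updateCol_of_transpose_eq_neg hM (by simp) L l c d using 3
    <;> ext i j <;> simp [updateRow_apply, updateCol_apply, hlast]
end

section
/- Suppose formal Mandelstam variables s_{ab} for 1 ≤ a < b ≤ 6 satisfy momentum conservation (for each a, the sum over b ≠ a of s_{ab} is zero, where s_{ba} := s_{ab}) together with the split-kinematics conditions s_{24} = s_{46} = s_{26} = 0. Then the 6-point biadjoint partial amplitude m_6(𝕀,𝕀), defined as the sum over the 14 planar binary trees of the reciprocals of products of their planar propagators, equals (1/s_{12} + 1/s_{23})(1/s_{34} + 1/s_{45})(1/s_{56} + 1/s_{61}), as an identity of rational functions on this subspace. -/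
set_option maxHeartbeats 2000000


/-- Smooth 3-split of the 6-point biadjoint amplitude.  The Mandelstam variables
`s a b` (symmetric, `1 ≤ a < b ≤ 6`) satisfy momentum conservation; on the
`(1,3,5)` split kinematics subspace `s24 = s46 = s26 = 0` the partial amplitude
`m₆(𝕀,𝕀)`, i.e. the sum over the 14 planar binary trees of the reciprocals of the
products of their planar propagators (with `s_{abc} = s_{ab} + s_{bc} + s_{ac}`),
equals `(1/s12 + 1/s23)(1/s34 + 1/s45)(1/s56 + 1/s61)`. -/
theorem m6_smooth_split_135
    (s12 s13 s14 s15 s16 s23 s24 s25 s26 s34 s35 s36 s45 s46 s56 : ℂ)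
    (h1 : s12 + s13 + s14 + s15 + s16 = 0)
    (h2 : s12 + s23 + s24 + s25 + s26 = 0)
    (h3 : s13 + s23 + s34 + s35 + s36 = 0)
    (h4 : s14 + s24 + s34 + s45 + s46 = 0)
    (h5 : s15 + s25 + s35 + s45 + s56 = 0)
    (h6 : s16 + s26 + s36 + s46 + s56 = 0)
    (hs24 : s24 = 0) (hs46 : s46 = 0) (hs26 : s26 = 0)
    (hn12 : s12 ≠ 0) (hn23 : s23 ≠ 0) (hn34 : s34 ≠ 0)
    (hn45 : s45 ≠ 0) (hn56 : s56 ≠ 0) (hn61 : s16 ≠ 0)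
    (hn123 : s12 + s13 + s23 ≠ 0) (hn234 : s23 + s24 + s34 ≠ 0)
    (hn345 : s34 + s35 + s45 ≠ 0) :
    1/(s12 * (s12 + s13 + s23) * s56) + 1/(s23 * (s23 + s24 + s34) * s16)
      + 1/(s34 * (s34 + s35 + s45) * s12) + 1/(s45 * (s12 + s13 + s23) * s23)
      + 1/(s56 * (s23 + s24 + s34) * s34) + 1/(s16 * (s34 + s35 + s45) * s45)
      + 1/(s12 * s34 * s56) + 1/(s23 * s45 * s16)
      + 1/((s12 + s13 + s23) * s12 * s45) + 1/((s12 + s13 + s23) * s23 * s56)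
      + 1/((s23 + s24 + s34) * s23 * s56) + 1/((s23 + s24 + s34) * s34 * s16)
      + 1/((s34 + s35 + s45) * s34 * s16) + 1/((s34 + s35 + s45) * s45 * s12)
    = (1/s12 + 1/s23) * (1/s34 + 1/s45) * (1/s56 + 1/s16) := by
  have hA : s12 + s13 + s23 = s45 + s56 := by
    linear_combination (h1 + h2 + h3 - h4 - h5 - h6)/2 + hs46
  have hB : s23 + s24 + s34 = s23 + s34 := by linear_combination hs24
  have hC : s34 + s35 + s45 = s12 + s16 := by
    linear_combination (h3 + h4 + h5 - h1 - h2 - h6)/2 + hs26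
  rw [hA] at hn123; rw [hB] at hn234; rw [hC] at hn345
  rw [hA, hB, hC]
  have hP1 : 1/(s12 * (s45 + s56) * s56) + 1/((s45 + s56) * s12 * s45)
      = 1/(s12*s45*s56) := by field_simp
  have hP2 : 1/(s45 * (s45 + s56) * s23) + 1/((s45 + s56) * s23 * s56)
      = 1/(s23*s45*s56) := by field_simp; ring
  have hP3 : 1/(s23 * (s23 + s34) * s16) + 1/((s23 + s34) * s34 * s16)
      = 1/(s23*s34*s16) := by field_simp; ring
  have hP4 : 1/(s56 * (s23 + s34) * s34) + 1/((s23 + s34) * s23 * s56)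
      = 1/(s23*s34*s56) := by field_simp
  have hP5 : 1/(s34 * (s12 + s16) * s12) + 1/((s12 + s16) * s34 * s16)
      = 1/(s12*s34*s16) := by field_simp; ring
  have hP6 : 1/(s16 * (s12 + s16) * s45) + 1/((s12 + s16) * s45 * s12)
      = 1/(s12*s45*s16) := by field_simp
  linear_combination hP1 + hP2 + hP3 + hP4 + hP5 + hP6
end

section
/- Suppose formal Mandelstam variables s_{ab} for 1 ≤ a < b ≤ 5 satisfy momentum conservation and the degenerate split condition s_{14} = 0. Then the 5-point biadjoint partial amplitude m_5(𝕀,𝕀) = 1/(s_{12}s_{34}) + 1/(s_{23}s_{45}) + 1/(s_{34}s_{51}) + 1/(s_{45}s_{12}) + 1/(s_{51}s_{23}) equals (1/s_{51} + 1/s_{12})(1/s_{34} + 1/s_{45}). -/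
/-- Degenerate smooth split of the 5-point biadjoint amplitude: with momentum
conservation and the degenerate split condition `s14 = 0`, the amplitude
`m₅(𝕀,𝕀) = 1/(s12 s34) + 1/(s23 s45) + 1/(s34 s51) + 1/(s45 s12) + 1/(s51 s23)`
equals `(1/s51 + 1/s12)(1/s34 + 1/s45)` (here `s51 = s15`). -/
theorem m5_degenerate_split
    (s12 s13 s14 s15 s23 s24 s25 s34 s35 s45 : ℂ)
    (h1 : s12 + s13 + s14 + s15 = 0)
    (h2 : s12 + s23 + s24 + s25 = 0)
    (h3 : s13 + s23 + s34 + s35 = 0)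
    (h4 : s14 + s24 + s34 + s45 = 0)
    (h5 : s15 + s25 + s35 + s45 = 0)
    (hs14 : s14 = 0)
    (hn12 : s12 ≠ 0) (hn23 : s23 ≠ 0) (hn34 : s34 ≠ 0)
    (hn45 : s45 ≠ 0) (hn15 : s15 ≠ 0) :
    1/(s12 * s34) + 1/(s23 * s45) + 1/(s34 * s15) + 1/(s45 * s12) + 1/(s15 * s23)
      = (1/s15 + 1/s12) * (1/s34 + 1/s45) := by
  have hk : s23 = s15 + s45 := by
    linear_combination (h2 + h3 + h5 - h1 - h4) / 2 - h5 + hs14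
  have key : 1/(s23 * s45) + 1/(s15 * s23) = 1/(s15 * s45) := by
    rw [div_add_div _ _ (mul_ne_zero hn23 hn45) (mul_ne_zero hn15 hn23),
      div_eq_div_iff (mul_ne_zero (mul_ne_zero hn23 hn45) (mul_ne_zero hn15 hn23)) (mul_ne_zero hn15 hn45)]
    linear_combination (-(s15 * s23 * s45)) * hk
  linear_combination key
end

section
/- For n = 5 Mandelstam variables satisfying momentum conservation, the identity m_5(𝕀,𝕀) = (1/s_{12} + 1/s_{23})(1/(s_{51} − s_{23}) + 1/s_{45}) + (1/s_{12} + 1/s_{51})(1/s_{34} + 1/(s_{23} − s_{51})) holds, where m_5(𝕀,𝕀) = 1/(s_{12}s_{34}) + 1/(s_{23}s_{45}) + 1/(s_{34}s_{51}) + 1/(s_{45}s_{12}) + 1/(s_{51}s_{23}). -/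
/-! Expanding the two products gives the four terms of `m₅(𝕀,𝕀)` that avoid the spurious pole
`s15 - s23`, plus `(1/s23 - 1/s15)/(s15 - s23)`, which is the fifth term `1/(s15 s23)` by
partial fractions. -/

theorem one_div_sub_one_div_div_sub {K : Type*} [Field K] {a b : K}
    (ha : a ≠ 0) (hb : b ≠ 0) (hab : a - b ≠ 0) :
    (1 / b - 1 / a) / (a - b) = 1 / (a * b) := by
  field_simp

theorem m5_soft_triangulation_general
    (s12 s15 s23 s34 s45 : ℂ)
    (hn23 : s23 ≠ 0) (hn15 : s15 ≠ 0) (hn : s15 - s23 ≠ 0) :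
    1/(s12 * s34) + 1/(s23 * s45) + 1/(s34 * s15) + 1/(s45 * s12) + 1/(s15 * s23)
      = (1/s12 + 1/s23) * (1/(s15 - s23) + 1/s45)
        + (1/s12 + 1/s15) * (1/s34 + 1/(s23 - s15)) := by
  rw [← one_div_sub_one_div_div_sub hn15 hn23 hn, ← neg_sub s15 s23, one_div_neg_eq_neg_one_div]
  ring

/-- The soft-limit triangulation identity for the 5-point biadjoint amplitude
(Equation (6.5) of the paper): under momentum conservation, and for generic
kinematics so that all denominators are nonzero,
`m₅(𝕀,𝕀) = (1/s12 + 1/s23)(1/(s51 - s23) + 1/s45) + (1/s12 + 1/s51)(1/s34 + 1/(s23 - s51))`,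
where `m₅(𝕀,𝕀) = 1/(s12 s34) + 1/(s23 s45) + 1/(s34 s51) + 1/(s45 s12) + 1/(s51 s23)`
and `s51 = s15`. -/
theorem m5_soft_triangulation
    (s12 s13 s14 s15 s23 s24 s25 s34 s35 s45 : ℂ)
    (h1 : s12 + s13 + s14 + s15 = 0)
    (h2 : s12 + s23 + s24 + s25 = 0)
    (h3 : s13 + s23 + s34 + s35 = 0)
    (h4 : s14 + s24 + s34 + s45 = 0)
    (h5 : s15 + s25 + s35 + s45 = 0)
    (hn12 : s12 ≠ 0) (hn23 : s23 ≠ 0) (hn34 : s34 ≠ 0)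
    (hn45 : s45 ≠ 0) (hn15 : s15 ≠ 0) (hn : s15 - s23 ≠ 0) :
    1/(s12 * s34) + 1/(s23 * s45) + 1/(s34 * s15) + 1/(s45 * s12) + 1/(s15 * s23)
      = (1/s12 + 1/s23) * (1/(s15 - s23) + 1/s45)
        + (1/s12 + 1/s15) * (1/s34 + 1/(s23 - s15)) :=
  m5_soft_triangulation_general s12 s15 s23 s34 s45 hn23 hn15 hn
end

section
/- The 6-point NLSM partial amplitude A_6^{NLSM}(𝕀) = ( (1/2)(s_{12}+s_{23})(s_{45}+s_{56})/s_{123} − s_{12} ) + its five cyclic images (under i → i+m mod 6, m = 1,...,5) equals the BCFW-form expression ((s_{12}+s_{23}−s_{123})(s_{45}+s_{56}))/s_{123} + ((s_{23}+s_{34})(s_{56}+s_{61}−s_{234}))/s_{234} + ((s_{34}+s_{45}−s_{345})(s_{61}+s_{12}−s_{345}))/s_{345} + s_{34}+s_{45}−s_{345}, assuming 6-point momentum conservation. -/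
set_option maxHeartbeats 2000000


/-- The 6-point NLSM partial amplitude, written as
`((1/2)(s12+s23)(s45+s56)/s123 - s12)` plus its five cyclic images, equals the
BCFW-form expression obtained from the split-kinematics recursion, assuming
6-point momentum conservation (with `s_{abc} = s_{ab} + s_{bc} + s_{ac}`). -/
theorem nlsm6_cyclic_eq_bcfw_form
    (s12 s13 s14 s15 s16 s23 s24 s25 s26 s34 s35 s36 s45 s46 s56 : ℂ)
    (h1 : s12 + s13 + s14 + s15 + s16 = 0)
    (h2 : s12 + s23 + s24 + s25 + s26 = 0)
    (h3 : s13 + s23 + s34 + s35 + s36 = 0)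
    (h4 : s14 + s24 + s34 + s45 + s46 = 0)
    (h5 : s15 + s25 + s35 + s45 + s56 = 0)
    (h6 : s16 + s26 + s36 + s46 + s56 = 0)
    (hn123 : s12 + s13 + s23 ≠ 0)
    (hn234 : s23 + s24 + s34 ≠ 0)
    (hn345 : s34 + s35 + s45 ≠ 0) :
    -- Σ over the six cyclic images i ↦ i + m (mod 6), m = 0,…,5 of
    -- (1/2)(s12+s23)(s45+s56)/s123 − s12 ; note s456 = s123, s561 = s234,
    -- s612 = s345 under momentum conservation.
    ((1/2) * (s12 + s23) * (s45 + s56) / (s12 + s13 + s23) - s12)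
      + ((1/2) * (s23 + s34) * (s56 + s16) / (s23 + s24 + s34) - s23)
      + ((1/2) * (s34 + s45) * (s16 + s12) / (s34 + s35 + s45) - s34)
      + ((1/2) * (s45 + s56) * (s12 + s23) / (s45 + s46 + s56) - s45)
      + ((1/2) * (s56 + s16) * (s23 + s34) / (s56 + s15 + s16) - s56)
      + ((1/2) * (s16 + s12) * (s34 + s45) / (s16 + s26 + s12) - s16)
    = (s12 + s23 - (s12 + s13 + s23)) * (s45 + s56) / (s12 + s13 + s23)
      + (s23 + s34) * (s56 + s16 - (s23 + s24 + s34)) / (s23 + s24 + s34)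
      + (s34 + s45 - (s34 + s35 + s45)) * (s16 + s12 - (s34 + s35 + s45))
          / (s34 + s35 + s45)
      + s34 + s45 - (s34 + s35 + s45) := by
  have e1 : s45 + s46 + s56 = s12 + s13 + s23 := by
    linear_combination (h4 + h5 + h6 - h1 - h2 - h3) / 2
  have e2 : s56 + s15 + s16 = s23 + s24 + s34 := by
    linear_combination (h5 + h6 + h1 - h2 - h3 - h4) / 2
  have e3 : s16 + s26 + s12 = s34 + s35 + s45 := by
    linear_combination (h6 + h1 + h2 - h3 - h4 - h5) / 2
  have f1 : (s12 + s23 - (s12 + s13 + s23)) * (s45 + s56) / (s12 + s13 + s23)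
      = (s12 + s23) * (s45 + s56) / (s12 + s13 + s23) - (s45 + s56) := by
    field_simp
  have f2 : (s23 + s34) * (s56 + s16 - (s23 + s24 + s34)) / (s23 + s24 + s34)
      = (s23 + s34) * (s56 + s16) / (s23 + s24 + s34) - (s23 + s34) := by
    field_simp
  have f3 : (s34 + s45 - (s34 + s35 + s45)) * (s16 + s12 - (s34 + s35 + s45))
        / (s34 + s35 + s45)
      = (s34 + s45) * (s16 + s12) / (s34 + s35 + s45)
        - (s34 + s45) - (s16 + s12) + (s34 + s35 + s45) := by
    field_simp; ring
  rw [e1, e2, e3, f1, f2, f3]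
  ring
end

section
/- For generalized k = 3 Mandelstam invariants 𝔰_{abc} on 6 labels satisfying Σ_{J ∋ a} 𝔰_J = 0 for each a ∈ {1,...,6} (sum over 3-element subsets containing a) and 𝔰_J = 0 if J has a repeated index, the invariant R̃ := 𝔰_{156}+𝔰_{256}+𝔰_{345}+𝔰_{346}+𝔰_{356}+𝔰_{456} equals the planar basis element η_{246} := (1/6)(6𝔰_{123}+5𝔰_{124}+4𝔰_{125}+3𝔰_{126}+4𝔰_{134}+3𝔰_{135}+2𝔰_{136}+2𝔰_{145}+𝔰_{146}+6𝔰_{156}+3𝔰_{234}+2𝔰_{235}+𝔰_{236}+𝔰_{245}+5𝔰_{256}+6𝔰_{345}+5𝔰_{346}+4𝔰_{356}+3𝔰_{456}). -/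
/-!
Summing the momentum relations `∑_{J ∋ a} 𝔰_J = 0` against any weight `w a` and exchanging the
two sums gives `∑_J (∑_{a ∈ J} w a) 𝔰_J = 0`. With the labels `0, …, 5` and the weight
`w a = a - 3`, this relation is `6 (R̃ - η₂₄₆) = 0`.
-/

open Finset

section MomentumConservation

variable {α R : Type*} [Fintype α] [DecidableEq α] [NonUnitalNonAssocSemiring R]

theorem sum_mul_sum_filter_card_mem (w : α → R) (S : Finset α → R) (k : ℕ) :
    ∑ a, w a * ∑ J ∈ univ.filter (fun J : Finset α => J.card = k ∧ a ∈ J), S J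
      = ∑ J ∈ univ.filter (fun J : Finset α => J.card = k), (∑ a ∈ J, w a) * S J := by
  simp only [mul_sum, sum_mul]
  exact sum_comm' fun a J => by simp only [mem_univ, mem_filter, true_and]; tauto

theorem sum_filter_card_sum_mul_eq_zero {S : Finset α → R} {k : ℕ}
    (hmom : ∀ a, ∑ J ∈ univ.filter (fun J : Finset α => J.card = k ∧ a ∈ J), S J = 0)
    (w : α → R) :
    ∑ J ∈ univ.filter (fun J : Finset α => J.card = k), (∑ a ∈ J, w a) * S J = 0 := by
  simp only [← sum_mul_sum_filter_card_mem, hmom, mul_zero, sum_const_zero]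

end MomentumConservation

/-- For generalized `k = 3` Mandelstam invariants on 6 labels (modelled as a
function `S` on 3-element subsets of `Fin 6`; labels `1,…,6` correspond to
`0,…,5`), satisfying the generalized momentum conservation
`∑_{J ∋ a} S J = 0` for each label `a`, the invariant
`R̃ = 𝔰₁₅₆ + 𝔰₂₅₆ + 𝔰₃₄₅ + 𝔰₃₄₆ + 𝔰₃₅₆ + 𝔰₄₅₆` equals the planar basis element
`η₂₄₆` given by the explicit rational linear combination below. -/
theorem Rtilde_eq_eta246
    (S : Finset (Fin 6) → ℂ)
    (hmom : ∀ a : Fin 6,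
      ∑ J ∈ Finset.univ.filter (fun J : Finset (Fin 6) => J.card = 3 ∧ a ∈ J), S J = 0) :
    S {0, 4, 5} + S {1, 4, 5} + S {2, 3, 4} + S {2, 3, 5} + S {2, 4, 5} + S {3, 4, 5}
      = (1/6 : ℂ) *
        (6 * S {0, 1, 2} + 5 * S {0, 1, 3} + 4 * S {0, 1, 4} + 3 * S {0, 1, 5}
          + 4 * S {0, 2, 3} + 3 * S {0, 2, 4} + 2 * S {0, 2, 5} + 2 * S {0, 3, 4}
          + S {0, 3, 5} + 6 * S {0, 4, 5} + 3 * S {1, 2, 3} + 2 * S {1, 2, 4}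
          + S {1, 2, 5} + S {1, 3, 4} + 5 * S {1, 4, 5} + 6 * S {2, 3, 4}
          + 5 * S {2, 3, 5} + 4 * S {2, 4, 5} + 3 * S {3, 4, 5}) := by
  have h := sum_filter_card_sum_mul_eq_zero hmom fun a => (a.val : ℂ) - 3
  rw [show univ.filter (fun J : Finset (Fin 6) => J.card = 3) =
      {{0, 1, 2}, {0, 1, 3}, {0, 1, 4}, {0, 1, 5}, {0, 2, 3}, {0, 2, 4}, {0, 2, 5}, {0, 3, 4},
        {0, 3, 5}, {0, 4, 5}, {1, 2, 3}, {1, 2, 4}, {1, 2, 5}, {1, 3, 4}, {1, 3, 5}, {1, 4, 5},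
        {2, 3, 4}, {2, 3, 5}, {2, 4, 5}, {3, 4, 5}} by decide] at h
  simp (disch := decide) only [sum_insert, sum_singleton] at h
  norm_num at h
  linear_combination h / 6
end

section
/- In the soft limit p_n → 0 (parametrized by s_{n-1,n} = τ ŝ_{n-1,n}, s_{n,1} = τ ŝ_{n,1}, s_{an} = τ ŝ_{an}, τ → 0), the biadjoint partial amplitude satisfies τ·m_n(𝕀_n,𝕀_n) → (1/ŝ_{n-1,n} + 1/ŝ_{n,1})·m_{n-1}(𝕀_{n-1},𝕀_{n-1}); i.e., the leading 1/τ singularity of m_n factors as the soft factor times the (n−1)-point amplitude. (It suffices to verify this for n = 5: τ·m_5 → (1/ŝ_{45}+1/ŝ_{51})·m_4 where m_4 = 1/s_{12}+1/s_{23}.) -/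
/-!
Momentum conservation in the rows `1, …, 4` gives the exact identity
`2 (s₃₄ - s₁₂) = s₁₅ + s₂₅ - s₃₅ - s₄₅`, so in the soft limit `s₃₄ → s₁₂`.
Of the five planar trees only `1/(s₁₂ s₃₄)` lacks a soft pole; multiplying by `τ` kills it,
while the other four trees, grouped by the pole `s₄₅` or `s₁₅` they carry, leave
`ŝ₄₅⁻¹ m₄(s₁₂, s₂₃) + ŝ₅₁⁻¹ m₄(s₃₄, s₂₃)`, which tends to the soft factor times `m₄(s₁₂, s₂₃)`.
-/

open Filter Topology

namespace BiadjointAmplitude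

variable {K : Type*} [Field K]

def m4 (s12 s23 : K) : K := 1 / s12 + 1 / s23

def m5 (s : ℕ → ℕ → K) : K :=
  1 / (s 1 2 * s 3 4) + 1 / (s 2 3 * s 4 5) + 1 / (s 3 4 * s 1 5)
    + 1 / (s 4 5 * s 1 2) + 1 / (s 1 5 * s 2 3)

theorem two_mul_s34_sub_s12 {R : Type*} [CommRing R] (s : ℕ → ℕ → R)
    (hsym : ∀ a b, s a b = s b a) (hdiag : ∀ a, s a a = 0)
    (hmom : ∀ a ∈ Finset.Icc 1 5, ∑ b ∈ Finset.Icc 1 5, s a b = 0) :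
    2 * (s 3 4 - s 1 2) = s 1 5 + s 2 5 - s 3 5 - s 4 5 := by
  have row (a : ℕ) (ha : a ∈ Finset.Icc 1 5) : s a 1 + s a 2 + s a 3 + s a 4 + s a 5 = 0 := by
    simpa [Finset.sum_Icc_succ_top] using hmom a ha
  have r1 := row 1 (by decide)
  have r2 := row 2 (by decide)
  have r3 := row 3 (by decide)
  have r4 := row 4 (by decide)
  rw [hdiag] at r1 r2 r3 r4
  rw [hsym 2 1] at r2
  rw [hsym 3 1, hsym 3 2] at r3
  rw [hsym 4 1, hsym 4 2, hsym 4 3] at r4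
  linear_combination r3 + r4 - r1 - r2

theorem mul_m5_of_soft (s : ℕ → ℕ → K) {τ x y : K} (hτ : τ ≠ 0)
    (h45 : s 4 5 = τ * y) (h15 : s 1 5 = τ * x) :
    τ * m5 s = τ / (s 1 2 * s 3 4) + y⁻¹ * m4 (s 1 2) (s 2 3) + x⁻¹ * m4 (s 3 4) (s 2 3) := by
  have hτ' : τ * τ⁻¹ = 1 := mul_inv_cancel₀ hτ
  simp only [m5, m4, h45, h15, one_div, mul_inv]
  linear_combination (y⁻¹ * ((s 2 3)⁻¹ + (s 1 2)⁻¹) + x⁻¹ * ((s 3 4)⁻¹ + (s 2 3)⁻¹)) * hτ'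

theorem tendsto_s34_of_soft (s : ℕ → ℕ → ℝ → ℂ) (h : ℕ → ℂ)
    (hsym : ∀ a b τ, s a b τ = s b a τ) (hdiag : ∀ a τ, s a a τ = 0)
    (hmom : ∀ (τ : ℝ) (a : ℕ), a ∈ Finset.Icc 1 5 → ∑ b ∈ Finset.Icc 1 5, s a b τ = 0)
    (hsoft : ∀ (a : ℕ) (τ : ℝ), a ∈ Finset.Icc 1 4 → s a 5 τ = (τ : ℂ) * h a)
    {σ12 : ℂ} (h12 : Tendsto (s 1 2) (𝓝 0) (𝓝 σ12)) :
    Tendsto (s 3 4) (𝓝 0) (𝓝 σ12) := by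
  set c : ℂ := (h 1 + h 2 - h 3 - h 4) / 2
  have hs34 : s 3 4 = fun τ => s 1 2 τ + (τ : ℂ) * c := by
    funext τ
    have h2 := two_mul_s34_sub_s12 (fun a b => s a b τ) (hsym · · τ) (hdiag · τ) (hmom τ)
    rw [hsoft 1 τ (by decide), hsoft 2 τ (by decide), hsoft 3 τ (by decide),
      hsoft 4 τ (by decide)] at h2
    linear_combination h2 / 2
  have hτc : Tendsto (fun τ : ℝ => (τ : ℂ) * c) (𝓝 0) (𝓝 0) := by
    simpa using (Complex.continuous_ofReal.tendsto 0).mul_const c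
  simpa [hs34] using h12.add hτc

theorem tendsto_m4 {s12 s23 : ℝ → ℂ} {l : Filter ℝ} {σ12 σ23 : ℂ}
    (h12 : Tendsto s12 l (𝓝 σ12)) (h23 : Tendsto s23 l (𝓝 σ23))
    (hσ12 : σ12 ≠ 0) (hσ23 : σ23 ≠ 0) :
    Tendsto (fun τ => m4 (s12 τ) (s23 τ)) l (𝓝 (m4 σ12 σ23)) :=
  (tendsto_const_nhds.div h12 hσ12).add (tendsto_const_nhds.div h23 hσ23)

end BiadjointAmplitude

open BiadjointAmplitude in
theorem soft_limit_m5_general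
    (s : ℕ → ℕ → ℝ → ℂ) (h : ℕ → ℂ)
    (hsym : ∀ a b τ, s a b τ = s b a τ)
    (hdiag : ∀ a τ, s a a τ = 0)
    (hmom : ∀ (τ : ℝ) (a : ℕ), a ∈ Finset.Icc 1 5 →
      ∑ b ∈ Finset.Icc 1 5, s a b τ = 0)
    (hsoft : ∀ (a : ℕ) (τ : ℝ), a ∈ Finset.Icc 1 4 → s a 5 τ = (τ : ℂ) * h a)
    (σ12 σ23 : ℂ)
    (h12 : Tendsto (s 1 2) (nhds 0) (nhds σ12))
    (h23 : Tendsto (s 2 3) (nhds 0) (nhds σ23))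
    (hσ12 : σ12 ≠ 0) (hσ23 : σ23 ≠ 0) :
    Tendsto (fun τ : ℝ => (τ : ℂ) *
        (1/(s 1 2 τ * s 3 4 τ) + 1/(s 2 3 τ * s 4 5 τ) + 1/(s 3 4 τ * s 1 5 τ)
          + 1/(s 4 5 τ * s 1 2 τ) + 1/(s 1 5 τ * s 2 3 τ)))
      (nhdsWithin 0 {0}ᶜ)
      (nhds ((1/(h 4) + 1/(h 1)) * (1/σ12 + 1/σ23))) := by
  have h34 := tendsto_s34_of_soft s h hsym hdiag hmom hsoft h12
  have hτ : Tendsto (fun τ : ℝ => (τ : ℂ)) (𝓝 0) (𝓝 0) := Complex.continuous_ofReal.tendsto' 0 0 rfl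
  have hpole : Tendsto (fun τ : ℝ => (τ : ℂ) / (s 1 2 τ * s 3 4 τ)) (𝓝 0) (𝓝 0) := by
    rw [← zero_div (σ12 * σ12)]
    exact hτ.div (h12.mul h34) (mul_ne_zero hσ12 hσ12)
  have hlim : Tendsto (fun τ : ℝ => (τ : ℂ) / (s 1 2 τ * s 3 4 τ)
      + (h 4)⁻¹ * m4 (s 1 2 τ) (s 2 3 τ) + (h 1)⁻¹ * m4 (s 3 4 τ) (s 2 3 τ))
      (𝓝[≠] 0) (𝓝 ((1 / h 4 + 1 / h 1) * m4 σ12 σ23)) := by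
    rw [one_div, one_div, add_mul, ← zero_add ((h 4)⁻¹ * _)]
    exact ((hpole.add ((tendsto_m4 h12 h23 hσ12 hσ23).const_mul _)).add
      ((tendsto_m4 h34 h23 hσ12 hσ23).const_mul _)).mono_left nhdsWithin_le_nhds
  refine hlim.congr' ?_
  filter_upwards [self_mem_nhdsWithin] with τ hτ0
  exact (mul_m5_of_soft (s · · τ) (Complex.ofReal_ne_zero.mpr hτ0)
    (hsoft 4 τ (by decide)) (hsoft 1 τ (by decide))).symm

/-- Soft limit of the 5-point biadjoint amplitude.  The Mandelstam variables are
one-parameter families `s a b τ` (symmetric, vanishing diagonal, momentum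
conservation for all `τ`) with the soft scaling `s a 5 τ = τ * ŝ a` for
`a = 1,…,4`, and with `s12, s23, s34` converging as `τ → 0`.  Then
`τ * m₅ → (1/ŝ45 + 1/ŝ51)(1/s12 + 1/s23)`: the leading `1/τ` singularity of
`m₅` factors as the soft factor times the 4-point amplitude
`m₄ = 1/s12 + 1/s23`. -/
theorem soft_limit_m5
    (s : ℕ → ℕ → ℝ → ℂ) (h : ℕ → ℂ)
    (hsym : ∀ a b τ, s a b τ = s b a τ)
    (hdiag : ∀ a τ, s a a τ = 0)
    (hmom : ∀ (τ : ℝ) (a : ℕ), a ∈ Finset.Icc 1 5 →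
      ∑ b ∈ Finset.Icc 1 5, s a b τ = 0)
    (hsoft : ∀ (a : ℕ) (τ : ℝ), a ∈ Finset.Icc 1 4 → s a 5 τ = (τ : ℂ) * h a)
    (σ12 σ23 σ34 : ℂ)
    (h12 : Tendsto (s 1 2) (nhds 0) (nhds σ12))
    (h23 : Tendsto (s 2 3) (nhds 0) (nhds σ23))
    (h34 : Tendsto (s 3 4) (nhds 0) (nhds σ34))
    (hσ12 : σ12 ≠ 0) (hσ23 : σ23 ≠ 0) (h45 : h 4 ≠ 0) (h51 : h 1 ≠ 0) :
    Tendsto (fun τ : ℝ => (τ : ℂ) *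
        (1/(s 1 2 τ * s 3 4 τ) + 1/(s 2 3 τ * s 4 5 τ) + 1/(s 3 4 τ * s 1 5 τ)
          + 1/(s 4 5 τ * s 1 2 τ) + 1/(s 1 5 τ * s 2 3 τ)))
      (nhdsWithin 0 {0}ᶜ)
      (nhds ((1/(h 4) + 1/(h 1)) * (1/σ12 + 1/σ23))) :=
  soft_limit_m5_general s h hsym hdiag hmom hsoft σ12 σ23 h12 h23 hσ12 hσ23
end
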